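/- Let f, g : H → ℝ ∪ {∞} be closed, proper, convex functions on a real Hilbert space H and let γ > 0. Let z* be a fixed point of T_PRS and x* := prox_{γg}(z*). Then for every x_f in the effective domain of f and every x_g in the effective domain of g: f(x_f) + g(x_g) − f(x*) − g(x*) ≥ (1/γ)·⟨x_g − x_f, z* − x*⟩. -/

import Mathlib

/-!
The optimality condition of a proximal point `p = prox_{γh}(x)` says that `(x - p)/γ` is a
subgradient of `h` at `p`; it follows by comparing `p` with the points `p + t (w - p)` of the
segment to any `w ∈ dom h` and letting `t → 0⁺`. At a fixed point `z*` of `T_PRS`, the point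
`x* = prox_{γg}(z*)` is also `prox_{γf}(2x* - z*)`, so `(z* - x*)/γ ∈ ∂g(x*)` and
`(x* - z*)/γ ∈ ∂f(x*)`. The two subgradients cancel, and adding the two subgradient
inequalities gives the claim.
-/

open Filter Topology RealInnerProductSpace

theorem le_of_forall_pos_le_add_mul {a b c : ℝ}
    (h : ∀ t : ℝ, 0 < t → t ≤ 1 → a ≤ b + t * c) : a ≤ b := by
  have hlim : Tendsto (fun t : ℝ => b + t * c) (𝓝[>] 0) (𝓝 b) := by
    have : Tendsto (fun t : ℝ => b + t * c) (𝓝 0) (𝓝 (b + 0 * c)) :=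
      (continuous_const.add (continuous_id.mul continuous_const)).tendsto 0
    simpa using this.mono_left nhdsWithin_le_nhds
  refine ge_of_tendsto hlim ?_
  filter_upwards [Ioc_mem_nhdsGT one_pos] with t ht using h t ht.1 ht.2

section Convex

variable {E : Type*} [AddCommGroup E] [Module ℝ E]

def EConvex (h : E → EReal) : Prop :=
  ∀ x y : E, ∀ a b : ℝ, 0 ≤ a → 0 ≤ b → a + b = 1 →
    h (a • x + b • y) ≤ (a : EReal) * h x + (b : EReal) * h y

theorem EConvex.le_segment {h : E → EReal} {p w : E} {r s : ℝ} (hconv : EConvex h)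
    (hp : h p = r) (hw : h w = s) {t : ℝ} (ht₀ : 0 ≤ t) (ht₁ : t ≤ 1) :
    h (p + t • (w - p)) ≤ (((1 - t) * r + t * s : ℝ) : EReal) := by
  have hle := hconv p w (1 - t) t (by linarith) ht₀ (by ring)
  rwa [hp, hw, ← EReal.coe_mul, ← EReal.coe_mul, ← EReal.coe_add,
    show (1 - t) • p + t • w = p + t • (w - p) by module] at hle

end Convex

section Prox

variable {H : Type*} [NormedAddCommGroup H]

/-- `p = prox_{γh}(x)`. -/
def IsProxPoint (h : H → EReal) (γ : ℝ) (x p : H) : Prop :=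
  ∀ y : H, h p + ((1 / (2 * γ) * ‖p - x‖ ^ 2 : ℝ) : EReal) ≤
    h y + ((1 / (2 * γ) * ‖y - x‖ ^ 2 : ℝ) : EReal)

variable {h : H → EReal} {γ : ℝ} {x p w : H}

theorem IsProxPoint.ne_top (hp : IsProxPoint h γ x p) (hw : h w ≠ ⊤) : h p ≠ ⊤ := by
  intro hp_top
  have hle := hp w
  rw [hp_top, EReal.top_add_of_ne_bot (EReal.coe_ne_bot _), top_le_iff] at hle
  exact EReal.add_ne_top hw (EReal.coe_ne_top _) hle

variable [InnerProductSpace ℝ H]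

/-- The subgradient inequality for `(x - p)/γ ∈ ∂h(p)`. -/
theorem IsProxPoint.toReal_add_inner_le (hp : IsProxPoint h γ x p) (hconv : EConvex h)
    (hp_bot : h p ≠ ⊥) (hw_bot : h w ≠ ⊥) (hw : h w ≠ ⊤) :
    (h p).toReal + 1 / γ * ⟪x - p, w - p⟫ ≤ (h w).toReal := by
  set r := (h p).toReal
  set s := (h w).toReal
  set d := w - p
  have hr : h p = r := (EReal.coe_toReal (hp.ne_top hw) hp_bot).symm
  have hs : h w = s := (EReal.coe_toReal hw hw_bot).symm
  refine le_of_forall_pos_le_add_mul (c := 1 / (2 * γ) * ‖d‖ ^ 2) fun t ht₀ ht₁ => ?_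
  have hmin : r + 1 / (2 * γ) * ‖p - x‖ ^ 2 ≤
      (1 - t) * r + t * s + 1 / (2 * γ) * ‖p + t • d - x‖ ^ 2 := by
    have hle := (hp (p + t • d)).trans (add_le_add_left (hconv.le_segment hr hs ht₀.le ht₁) _)
    rw [hr, ← EReal.coe_add, ← EReal.coe_add] at hle
    exact_mod_cast hle
  have hexpand : ‖p + t • d - x‖ ^ 2 = ‖p - x‖ ^ 2 + 2 * t * ⟪p - x, d⟫ + t ^ 2 * ‖d‖ ^ 2 := by
    rw [show p + t • d - x = (p - x) + t • d by abel, norm_add_sq_real, real_inner_smul_right,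
      norm_smul, Real.norm_eq_abs, mul_pow, sq_abs]
    ring
  have hswap : ⟪x - p, d⟫ = -⟪p - x, d⟫ := by rw [← inner_neg_left, neg_sub]
  rw [hexpand] at hmin
  rw [hswap]
  refine le_of_mul_le_mul_left ?_ ht₀
  linear_combination hmin

end Prox

theorem prs_lower_fundamental_inequality_general
    {H : Type*} [NormedAddCommGroup H] [InnerProductSpace ℝ H]
    (f g : H → EReal)
    (hf_bot : ∀ x, f x ≠ ⊥) (hg_bot : ∀ x, g x ≠ ⊥)
    (hf_conv : ∀ x y : H, ∀ a b : ℝ, 0 ≤ a → 0 ≤ b → a + b = 1 →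
      f (a • x + b • y) ≤ (a : EReal) * f x + (b : EReal) * f y)
    (hg_conv : ∀ x y : H, ∀ a b : ℝ, 0 ≤ a → 0 ≤ b → a + b = 1 →
      g (a • x + b • y) ≤ (a : EReal) * g x + (b : EReal) * g y)
    (γ : ℝ)
    (proxf proxg : H → H)
    (hproxf : ∀ x p : H, proxf x = p ↔
      ∀ y : H, f p + ((1 / (2 * γ) * ‖p - x‖ ^ 2 : ℝ) : EReal) ≤
        f y + ((1 / (2 * γ) * ‖y - x‖ ^ 2 : ℝ) : EReal))
    (hproxg : ∀ x p : H, proxg x = p ↔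
      ∀ y : H, g p + ((1 / (2 * γ) * ‖p - x‖ ^ 2 : ℝ) : EReal) ≤
        g y + ((1 / (2 * γ) * ‖y - x‖ ^ 2 : ℝ) : EReal))
    (T : H → H)
    (hT : ∀ w : H, T w = (2 : ℝ) • proxf ((2 : ℝ) • proxg w - w) - ((2 : ℝ) • proxg w - w))
    (zstar : H) (hzstar : T zstar = zstar)
    (xstar : H) (hxstar : xstar = proxg zstar)
    (xf xg : H) (hxf : f xf ≠ ⊤) (hxg : g xg ≠ ⊤) :
    ((1 / γ * (inner ℝ (xg - xf) (zstar - xstar) : ℝ) : ℝ) : EReal) ≤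
      f xf + g xg - (f xstar + g xstar) := by
  have hg_prox : IsProxPoint g γ zstar xstar := (hproxg zstar xstar).mp hxstar.symm
  have hf_prox : IsProxPoint f γ ((2 : ℝ) • xstar - zstar) xstar := by
    refine (hproxf _ _).mp (smul_right_injective H (two_ne_zero : (2 : ℝ) ≠ 0) ?_)
    have hfix := hT zstar
    rw [hzstar, ← hxstar, eq_sub_iff_add_eq] at hfix
    show (2 : ℝ) • proxf _ = (2 : ℝ) • xstar
    rw [← hfix]
    module
  have hg_sub := hg_prox.toReal_add_inner_le hg_conv (hg_bot xstar) (hg_bot xg) hxg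
  have hf_sub := hf_prox.toReal_add_inner_le hf_conv (hf_bot xstar) (hf_bot xf) hxf
  rw [← EReal.coe_toReal hxf (hf_bot xf), ← EReal.coe_toReal hxg (hg_bot xg),
    ← EReal.coe_toReal (hf_prox.ne_top hxf) (hf_bot xstar),
    ← EReal.coe_toReal (hg_prox.ne_top hxg) (hg_bot xstar)]
  norm_cast
  have hcancel : (2 : ℝ) • xstar - zstar - xstar = -(zstar - xstar) := by module
  rw [hcancel, inner_neg_left] at hf_sub
  have hsplit : ⟪xg - xf, zstar - xstar⟫ =
      ⟪zstar - xstar, xg - xstar⟫ - ⟪zstar - xstar, xf - xstar⟫ := by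
    rw [← inner_sub_right, sub_sub_sub_cancel_right, real_inner_comm]
  rw [hsplit]
  linarith

/-- Proposition (lower fundamental inequality): for closed, proper, convex
`f, g : H → ℝ ∪ {∞}`, `γ > 0`, a fixed point `z*` of `T_PRS` and `x* = prox_{γg}(z*)`,
for all `x_f ∈ dom f` and `x_g ∈ dom g`:
`f(x_f) + g(x_g) − f(x*) − g(x*) ≥ (1/γ)⟨x_g − x_f, z* − x*⟩`. -/
theorem prs_lower_fundamental_inequality
    {H : Type*} [NormedAddCommGroup H] [InnerProductSpace ℝ H] [CompleteSpace H]
    (f g : H → EReal)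
    (hf_bot : ∀ x, f x ≠ ⊥) (hg_bot : ∀ x, g x ≠ ⊥)
    (hf_proper : ∃ x, f x ≠ ⊤) (hg_proper : ∃ x, g x ≠ ⊤)
    (hf_lsc : LowerSemicontinuous f) (hg_lsc : LowerSemicontinuous g)
    (hf_conv : ∀ x y : H, ∀ a b : ℝ, 0 ≤ a → 0 ≤ b → a + b = 1 →
      f (a • x + b • y) ≤ (a : EReal) * f x + (b : EReal) * f y)
    (hg_conv : ∀ x y : H, ∀ a b : ℝ, 0 ≤ a → 0 ≤ b → a + b = 1 →
      g (a • x + b • y) ≤ (a : EReal) * g x + (b : EReal) * g y)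
    (γ : ℝ) (hγ : 0 < γ)
    (proxf proxg : H → H)
    (hproxf : ∀ x p : H, proxf x = p ↔
      ∀ y : H, f p + ((1 / (2 * γ) * ‖p - x‖ ^ 2 : ℝ) : EReal) ≤
        f y + ((1 / (2 * γ) * ‖y - x‖ ^ 2 : ℝ) : EReal))
    (hproxg : ∀ x p : H, proxg x = p ↔
      ∀ y : H, g p + ((1 / (2 * γ) * ‖p - x‖ ^ 2 : ℝ) : EReal) ≤
        g y + ((1 / (2 * γ) * ‖y - x‖ ^ 2 : ℝ) : EReal))
    (T : H → H)
    (hT : ∀ w : H, T w = (2 : ℝ) • proxf ((2 : ℝ) • proxg w - w) - ((2 : ℝ) • proxg w - w))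
    (zstar : H) (hzstar : T zstar = zstar)
    (xstar : H) (hxstar : xstar = proxg zstar)
    (xf xg : H) (hxf : f xf ≠ ⊤) (hxg : g xg ≠ ⊤) :
    ((1 / γ * (inner ℝ (xg - xf) (zstar - xstar) : ℝ) : ℝ) : EReal) ≤
      f xf + g xg - (f xstar + g xstar) :=
  prs_lower_fundamental_inequality_general f g hf_bot hg_bot hf_conv hg_conv γ proxf proxg hproxf
    hproxg T hT zstar hzstar xstar hxstar xf xg hxf hxg
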